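/- Let M = (E, H) be a simple matroid with flat lattice L, let A^c be the complemented structure matrix of L, and let B be the restriction of A^c to rows indexed by atoms of L (identified with elements of E). Then the transpose of B is a boolean representation of M: a subset X ⊆ E is independent in M if and only if the columns of Bᵀ indexed by X are independent over the superboolean semiring. -/

import Mathlib

open scoped Classical

/-- The superboolean semiring `SB = {0, 1, 1^ν}`. -/
def SB := Fin 3

instance : DecidableEq SB := inferInstanceAs (DecidableEq (Fin 3))
instance : Fintype SB := inferInstanceAs (Fintype (Fin 3))

def SB.zero : SB := (0 : Fin 3)
def SB.one : SB := (1 : Fin 3)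
/-- The ghost element `1^ν`. -/
def SB.nu : SB := (2 : Fin 3)

def SB.val (a : SB) : ℕ := Fin.val a

instance : Zero SB := ⟨SB.zero⟩
instance : One SB := ⟨SB.one⟩

def SB.add (a b : SB) : SB := (⟨min (a.val + b.val) 2, by omega⟩ : Fin 3)
def SB.mul (a b : SB) : SB := (⟨min (a.val * b.val) 2, by omega⟩ : Fin 3)

instance : Add SB := ⟨SB.add⟩
instance : Mul SB := ⟨SB.mul⟩

instance : AddCommMonoid SB where
  add := (· + ·)
  add_assoc := by decide
  zero_add := by decide
  add_zero := by decide
  add_comm := by decide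
  nsmul := nsmulRec

instance : CommMonoid SB where
  mul := (· * ·)
  mul_assoc := by decide
  one_mul := by decide
  mul_one := by decide
  mul_comm := by decide
  npow := npowRec

/-- The permanent of a square superboolean matrix. -/
def sbPer {n : ℕ} (A : Matrix (Fin n) (Fin n) SB) : SB :=
  ∑ π : Equiv.Perm (Fin n), ∏ i, A (π i) i

/-- A square superboolean matrix is nonsingular when its permanent is `1`. -/
def Nonsingular {n : ℕ} (A : Matrix (Fin n) (Fin n) SB) : Prop := sbPer A = SB.one

/-- Membership in the ghost ideal `{0, 1^ν}`. -/
def SB.IsGhost (a : SB) : Prop := a = SB.zero ∨ a = SB.nu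

/-- A family of superboolean vectors is dependent if some nontrivial boolean
combination of them lies entirely in the ghost ideal. -/
def SBDep {κ ι : Type*} [Fintype κ] (v : κ → ι → SB) : Prop :=
  ∃ α : κ → SB, (∀ k, α k = SB.zero ∨ α k = SB.one) ∧ (∃ k, α k ≠ SB.zero) ∧
    ∀ j : ι, SB.IsGhost (∑ k, α k * v k j)

/-- Independence of a family of superboolean vectors. -/
def SBIndep {κ ι : Type*} [Fintype κ] (v : κ → ι → SB) : Prop := ¬ SBDep v

/-- A matrix is boolean if none of its entries is the ghost `1^ν`. -/
def IsBooleanMat {ι κ : Type*} (A : Matrix ι κ SB) : Prop := ∀ i j, A i j ≠ SB.nu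
/-- A matroid in the sense of Whitney: a nonempty hereditary collection of
independent sets satisfying the exchange axiom. -/
structure PaperMatroid (E : Type*) [Fintype E] where
  Indep : Set E → Prop
  exists_indep : ∃ X, Indep X
  indep_subset : ∀ ⦃X Y : Set E⦄, X ⊆ Y → Indep Y → Indep X
  exchange : ∀ ⦃X Y : Set E⦄, Indep X → Indep Y → Y.ncard = X.ncard + 1 →
    ∃ y ∈ Y \ X, Indep (insert y X)

namespace PaperMatroid

variable {E : Type*} [Fintype E] (M : PaperMatroid E)

/-- A circuit: a minimal dependent set. -/
def Circuit (C : Set E) : Prop := ¬ M.Indep C ∧ ∀ D ⊂ C, M.Indep D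

/-- The closure of `X`: `X` together with all `y` for which some circuit
contained in `X ∪ {y}` contains `y`. -/
def cl (X : Set E) : Set E :=
  X ∪ {y | y ∉ X ∧ ∃ C, M.Circuit C ∧ C ⊆ insert y X ∧ y ∈ C}

/-- A flat (closed set). -/
def Flat (F : Set E) : Prop := M.cl F = F

/-- A simple matroid: every subset of size at most `2` is independent. -/
def Simple : Prop := ∀ X : Set E, X.ncard ≤ 2 → M.Indep X

/-- A basis: a maximal independent set. -/
def Basis (B : Set E) : Prop :=
  M.Indep B ∧ ∀ X : Set E, M.Indep X → B ⊆ X → X = B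

/-- The lattice of flats of `M`, ordered by inclusion. -/
abbrev Flats := {F : Set E // M.Flat F}

end PaperMatroid

/-- The complemented structure matrix of the lattice of flats of `M`:
entry `(F, G)` is `1` iff `F ⊄ G`, and `0` iff `F ⊆ G`. -/
noncomputable def AcM {E : Type*} [Fintype E] (M : PaperMatroid E) :
    Matrix M.Flats M.Flats SB :=
  fun F G => if F.1 ⊆ G.1 then SB.zero else SB.one

/-!
A boolean combination of boolean columns, supported on `S`, is ghost in coordinate `j`
exactly when `S` does not have precisely one element with a `1` in row `j`. For the columns
`a ↦ [a ∉ G]` this says that columns indexed by `X` are independent iff every nonempty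
`S ⊆ X` has a flat `F` with `S \ F` a singleton. An independent `S` and `e ∈ S` give the flat
`cl (S \ {e})`; a circuit `C` has no such flat, since `e ∈ cl (C \ {e})` for every `e ∈ C`.
-/

open Set

namespace SB

lemma val_sum {κ : Type*} (s : Finset κ) (f : κ → SB) :
    (∑ k ∈ s, f k).val = min (∑ k ∈ s, (f k).val) 2 := by
  induction s using Finset.induction_on with
  | empty => rfl
  | insert k s hk ih =>
    rw [Finset.sum_insert hk, Finset.sum_insert hk]
    change min ((f k).val + (∑ i ∈ s, f i).val) 2 = _
    omega

@[simp] lemma zero_ne_one : SB.zero ≠ SB.one := by decide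

@[simp] lemma one_ne_zero : SB.one ≠ SB.zero := by decide

lemma isGhost_iff_val_ne_one (a : SB) : a.IsGhost ↔ a.val ≠ 1 := by
  unfold SB.IsGhost; revert a; decide

lemma val_eq_ite_of_ne_nu {a : SB} (ha : a ≠ SB.nu) : a.val = if a = SB.one then 1 else 0 := by
  revert a; decide

lemma mul_eq_ite {a : SB} (ha : a = SB.zero ∨ a = SB.one) (b : SB) :
    a * b = if a = SB.one then b else SB.zero := by
  revert a b; decide

lemma isGhost_sum_iff {κ : Type*} [Fintype κ] {f : κ → SB} (hf : ∀ k, f k ≠ SB.nu) :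
    (∑ k, f k).IsGhost ↔ {k | f k = SB.one}.ncard ≠ 1 := by
  have hcard : ∑ k, (f k).val = {k | f k = SB.one}.ncard := by
    rw [← Finset.coe_filter_univ, ncard_coe_finset, Finset.card_filter]
    exact Finset.sum_congr rfl fun k _ => val_eq_ite_of_ne_nu (hf k)
  rw [isGhost_iff_val_ne_one, val_sum, hcard]
  omega

lemma isGhost_sum_mul_iff {κ ι : Type*} [Fintype κ] {v : κ → ι → SB} (hv : IsBooleanMat v)
    {α : κ → SB} (hα : ∀ k, α k = SB.zero ∨ α k = SB.one) (j : ι) :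
    (∑ k, α k * v k j).IsGhost ↔ {k | α k = SB.one ∧ v k j = SB.one}.ncard ≠ 1 := by
  have hsupp : {k | (if α k = SB.one then v k j else SB.zero) = SB.one} =
      {k | α k = SB.one ∧ v k j = SB.one} := by
    ext k
    by_cases h : α k = SB.one <;> simp [h]
  rw [Finset.sum_congr rfl fun k _ => SB.mul_eq_ite (hα k) (v k j), SB.isGhost_sum_iff, hsupp]
  · intro k
    split_ifs
    exacts [hv k j, by decide]

end SB

theorem sbDep_iff_of_isBooleanMat {κ ι : Type*} [Fintype κ] {v : κ → ι → SB}
    (hv : IsBooleanMat v) :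
    SBDep v ↔ ∃ S : Set κ, S.Nonempty ∧ ∀ j, {k ∈ S | v k j = SB.one}.ncard ≠ 1 := by
  constructor
  · rintro ⟨α, hα, ⟨k, hk⟩, hghost⟩
    exact ⟨{k | α k = SB.one}, ⟨k, (hα k).resolve_left hk⟩,
      fun j => (SB.isGhost_sum_mul_iff hv hα j).1 (hghost j)⟩
  · rintro ⟨S, ⟨k, hk⟩, hS⟩
    have hα (k : κ) : (if k ∈ S then SB.one else SB.zero) = SB.zero ∨
        (if k ∈ S then SB.one else SB.zero) = SB.one := by
      split_ifs <;> simp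
    refine ⟨fun k => if k ∈ S then SB.one else SB.zero, hα, ⟨k, by simp [hk]⟩,
      fun j => (SB.isGhost_sum_mul_iff hv hα j).2 ?_⟩
    simpa using hS j

theorem sbIndep_iff_of_isBooleanMat {κ ι : Type*} [Fintype κ] {v : κ → ι → SB}
    (hv : IsBooleanMat v) :
    SBIndep v ↔ ∀ S : Set κ, S.Nonempty → ∃ j k, {i ∈ S | v i j = SB.one} = {k} := by
  simp [SBIndep, sbDep_iff_of_isBooleanMat hv, ncard_eq_one]

namespace Matroid

variable {α : Type*} {M : Matroid α} {I C F : Set α} {e : α}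

lemma Indep.exists_isFlat_sdiff_eq_singleton (hI : M.Indep I) (he : e ∈ I) :
    ∃ F, M.IsFlat F ∧ I \ F = {e} := by
  refine ⟨M.closure (I \ {e}), M.isFlat_closure _,
    eq_singleton_iff_unique_mem.2 ⟨⟨he, hI.notMem_closure_sdiff_of_mem he⟩, ?_⟩⟩
  rintro x ⟨hxI, hxF⟩
  by_contra hxe
  exact hxF (M.subset_closure _ (sdiff_subset.trans hI.subset_ground) ⟨hxI, hxe⟩)

lemma IsCircuit.sdiff_ne_singleton_of_isFlat (hC : M.IsCircuit C) (hF : M.IsFlat F) (e : α) :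
    C \ F ≠ {e} := by
  intro h
  have he : e ∈ C \ F := h ▸ mem_singleton e
  have hsub : C \ {e} ⊆ F := by
    rintro x ⟨hxC, hxe⟩
    by_contra hxF
    exact hxe (h ▸ ⟨hxC, hxF⟩ : x ∈ ({e} : Set α))
  exact he.2 (hF.closure ▸
    M.closure_subset_closure hsub (hC.mem_closure_sdiff_singleton_of_mem he.1))

end Matroid

namespace PaperMatroid

variable {E : Type*} [Fintype E] (M : PaperMatroid E)

lemma indep_empty : M.Indep ∅ :=
  let ⟨_, hX⟩ := M.exists_indep
  M.indep_subset (empty_subset _) hX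

noncomputable def toMatroid : Matroid E :=
  (IndepMatroid.ofFinite finite_univ M.Indep M.indep_empty
    (fun _ _ hJ hIJ => M.indep_subset hIJ hJ)
    (fun I J hI hJ hlt => by
      obtain ⟨J', hJ'J, hcard⟩ := exists_subset_card_eq (s := J) (n := I.ncard + 1) (by omega)
      obtain ⟨y, hy, hins⟩ := M.exchange hI (M.indep_subset hJ'J hJ) hcard
      exact ⟨y, hJ'J hy.1, hy.2, hins⟩)
    (fun I _ => subset_univ I)).matroid

@[simp] lemma toMatroid_indep {S : Set E} : M.toMatroid.Indep S ↔ M.Indep S := by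
  simp [toMatroid]

@[simp] lemma toMatroid_E : M.toMatroid.E = univ := rfl

@[simp] lemma toMatroid_isCircuit_iff {C : Set E} : M.toMatroid.IsCircuit C ↔ M.Circuit C := by
  simp [Matroid.isCircuit_iff_forall_ssubset, Matroid.Dep, Circuit]

lemma cl_eq_closure (X : Set E) : M.cl X = M.toMatroid.closure X := by
  ext e
  by_cases he : e ∈ X
  · simp [cl, he, M.toMatroid.subset_closure X (by simp) he]
  · simp [cl, he, Matroid.mem_closure_iff_exists_isCircuit he, and_comm, and_assoc]

lemma exists_isCircuit_subset_of_not_indep {X : Set E} (hX : ¬ M.Indep X) :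
    ∃ C ⊆ X, M.toMatroid.IsCircuit C :=
  ((M.toMatroid.not_indep_iff (subset_univ X)).1
    (mt M.toMatroid_indep.1 hX)).exists_isCircuit_subset

lemma flat_iff_isFlat {F : Set E} : M.Flat F ↔ M.toMatroid.IsFlat F := by
  rw [Flat, cl_eq_closure, Matroid.isFlat_iff_closure_eq]

end PaperMatroid

theorem flats_matrix_represents_general {E : Type*} [Fintype E] (M : PaperMatroid E)
    (X : Finset E) :
    M.Indep ↑X ↔
      SBIndep (fun (a : {y // y ∈ X}) (G : M.Flats) =>
        if (a : E) ∈ G.1 then SB.zero else SB.one) := by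
  rw [sbIndep_iff_of_isBooleanMat fun _ _ => by split_ifs <;> decide]
  have hsupp (T : Set {y // y ∈ X}) (G : M.Flats) :
      {a ∈ T | (if (a : E) ∈ G.1 then SB.zero else SB.one) = SB.one} =
        T \ (↑) ⁻¹' G.1 := by
    ext a
    by_cases ha : (a : E) ∈ G.1 <;> simp [ha]
  simp only [hsupp]
  constructor
  · rintro hX T ⟨k, hk⟩
    have hT : M.toMatroid.Indep ((↑) '' T) :=
      M.toMatroid_indep.2 (M.indep_subset (Subtype.coe_image_subset _ T) hX)
    obtain ⟨F, hF, hTF⟩ := hT.exists_isFlat_sdiff_eq_singleton (mem_image_of_mem _ hk)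
    refine ⟨⟨F, M.flat_iff_isFlat.2 hF⟩, k, Subtype.val_injective.image_injective ?_⟩
    rw [image_sdiff_preimage, image_singleton, hTF]
  · intro h
    by_contra hX
    obtain ⟨C, hCX, hC⟩ := M.exists_isCircuit_subset_of_not_indep hX
    obtain ⟨c, hc⟩ := hC.nonempty
    obtain ⟨G, k, hk⟩ := h (((↑) : {y // y ∈ X} → E) ⁻¹' C) ⟨⟨c, hCX hc⟩, hc⟩
    apply hC.sdiff_ne_singleton_of_isFlat (M.flat_iff_isFlat.1 G.2) k
    calc C \ G.1 = (↑) '' (((↑) : {y // y ∈ X} → E) ⁻¹' C \ (↑) ⁻¹' G.1) := by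
          rw [image_sdiff_preimage, image_preimage_eq_of_subset (by simpa using hCX)]
      _ = {↑k} := by rw [hk, image_singleton]

/-- The transpose of the restriction of the complemented structure matrix of the flat
lattice to the rows indexed by atoms (i.e. by elements of the ground set) is a boolean
representation of the simple matroid `M`: a set is independent in `M` iff the
corresponding columns are independent over the superboolean semiring. -/
theorem flats_matrix_represents {E : Type*} [Fintype E] (M : PaperMatroid E)
    (hs : M.Simple) (X : Finset E) :
    M.Indep ↑X ↔
      SBIndep (fun (a : {y // y ∈ X}) (G : M.Flats) =>
        if (a : E) ∈ G.1 then SB.zero else SB.one) :=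
  flats_matrix_represents_general M X
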